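/- arXiv:1703.03088 — 2 statements merged into one kernel-verified Lean document; each statement's English description precedes it below -/
import Mathlib

section
/- Let λ be a partition with n parts. Given any fixed list of column sets (a sequence of subsets of {1,...,n} whose sizes are weakly decreasing and compatible with λ, i.e., the i-th column set has size equal to the number of parts of λ that are at least i), there exists exactly one coinversion-free augmented filling of shape λ with basement w0 = (n,...,2,1) whose i-th column (excluding the basement) has entries equal to the i-th column set. -/
namespace Paper

/-! ## Augmented fillings, triples, major index (HHL model) -/

/-- Tie-broken strict order on (value, subscript) pairs: equal values are
ordered by subscript. -/
def tlt (x y : ℕ × ℕ) : Prop := x.1 < y.1 ∨ (x.1 = y.1 ∧ x.2 < y.2)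

/-- `cyc x y z`: the three tie-broken values, read increasingly, follow the
cyclic order x → y → z. -/
def cyc (x y z : ℕ × ℕ) : Prop :=
  (tlt x y ∧ tlt y z) ∨ (tlt y z ∧ tlt z x) ∨ (tlt z x ∧ tlt x y)

variable {n : ℕ}

/-- A type A triple: `a = (r, j-1)`, `b = (r, j)`, `c = (r', j)` with `r'` below `r`
and the row of `a, b` at least as long as that of `c`. -/
def typeA (α : Fin n → ℕ) (r r' : Fin n) (j : ℕ) : Prop :=
  r < r' ∧ 1 ≤ j ∧ j ≤ α r ∧ j ≤ α r' ∧ α r' ≤ α r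

/-- A type B triple: `a = (r, j-1)`, `b = (r, j)`, `c = (r', j-1)` with `r'` above `r`
and the row of `a, b` strictly longer than that of `c`. -/
def typeB (α : Fin n → ℕ) (r r' : Fin n) (j : ℕ) : Prop :=
  r' < r ∧ 1 ≤ j ∧ j ≤ α r ∧ j - 1 ≤ α r' ∧ α r' < α r

/-- A type A triple is an inversion triple if the entries ordered increasingly
(with subscripts a₃, b₁, c₂ breaking ties) follow the counterclockwise cycle b → a → c. -/
def invA (F : Fin n → ℕ → ℕ) (r r' : Fin n) (j : ℕ) : Prop :=
  cyc (F r j, 1) (F r (j-1), 3) (F r' j, 2)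

/-- A type B triple is an inversion triple if the entries ordered increasingly
(with subscripts c₂, a₃, b₁ breaking ties) follow the clockwise cycle c → b → a. -/
def invB (F : Fin n → ℕ → ℕ) (r r' : Fin n) (j : ℕ) : Prop :=
  cyc (F r' (j-1), 2) (F r j, 1) (F r (j-1), 3)

/-- Coinversion-free: every type A and type B triple is an inversion triple. -/
def CoinvFree (α : Fin n → ℕ) (F : Fin n → ℕ → ℕ) : Prop :=
  (∀ r r' j, typeA α r r' j → invA F r r' j) ∧
  (∀ r r' j, typeB α r r' j → invB F r r' j)

/-- Inversion-free: no type A or type B triple is an inversion triple. -/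
def InvFree (α : Fin n → ℕ) (F : Fin n → ℕ → ℕ) : Prop :=
  (∀ r r' j, typeA α r r' j → ¬ invA F r r' j) ∧
  (∀ r r' j, typeB α r r' j → ¬ invB F r r' j)

/-- The major index: the sum of `leg(u) + 1` over all descents `u`
(non-basement boxes whose entry strictly exceeds that of their left neighbour). -/
def maj (α : Fin n → ℕ) (F : Fin n → ℕ → ℕ) : ℕ :=
  ∑ i : Fin n, ∑ j ∈ Finset.Icc 1 (α i), if F i (j-1) < F i j then α i - j + 1 else 0

/-- The non-basement part of a filling of shape `α`, with entries encoded as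
`Fin n` (representing the values `1, …, n`). -/
abbrev Fill (n : ℕ) (α : Fin n → ℕ) := (i : Fin n) → Fin (α i) → Fin n

/-- The entry of the augmented filling at row `i`, column `j`; column `0` is
the basement `σ`, and column `j ≥ 1` holds the value `G i (j-1) + 1 ∈ {1, …, n}`. -/
def entry (α : Fin n → ℕ) (σ : Fin n → ℕ) (G : Fill n α) : Fin n → ℕ → ℕ :=
  fun i j => if j = 0 then σ i else if h : j - 1 < α i then ((G i ⟨j - 1, h⟩ : ℕ) + 1) else 0

/-- The key basement `w₀ = (n, n-1, …, 1)`, read top to bottom. -/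
def keyBasement (n : ℕ) : Fin n → ℕ := fun i => n - (i : ℕ)

/-- The reversal on `Fin n` (0-indexed version of `i ↦ n + 1 - i`). -/
def revFin {n : ℕ} (k : Fin n) : Fin n := ⟨n - 1 - (k : ℕ), by have := k.isLt; omega⟩

/-- The set of entries of the `j`-th (non-basement, `j ≥ 1`) column. -/
def colFinset (α : Fin n → ℕ) (σ : Fin n → ℕ) (G : Fill n α) (j : ℕ) : Finset ℕ :=
  (Finset.univ.filter (fun i : Fin n => j ≤ α i)).image (fun i => entry α σ G i j)

/-- The multiset of entries of the `j`-th (non-basement, `j ≥ 1`) column. -/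
def colMultiset (α : Fin n → ℕ) (σ : Fin n → ℕ) (G : Fill n α) (j : ℕ) : Multiset ℕ :=
  (Finset.univ.filter (fun i : Fin n => j ≤ α i)).val.map (fun i => entry α σ G i j)

/-- The multiset of all non-basement entries (the weight of the filling). -/
def allEntries (α : Fin n → ℕ) (G : Fill n α) : Multiset ℕ :=
  ∑ i : Fin n, ((Finset.univ : Finset (Fin (α i))).val.map (fun j => (G i j : ℕ) + 1))

/-- The largest part of `α`. -/
def maxPart (α : Fin n → ℕ) : ℕ := Finset.univ.sup α

/-- The down-increasing condition on a column with entries `d` (top), `e` (middle),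
`f` (bottom): `e > d > f` or `d > f > e` or `f > e > d`. -/
def downInc (d e f : ℕ) : Prop := (f < d ∧ d < e) ∨ (e < f ∧ f < d) ∨ (d < e ∧ e < f)

/-! ## Generating polynomials; the variables `x_1, x_2, …` are indexed by `ℕ`,
and `q` is the variable of the coefficient ring `ℤ[q]`. -/

/-- The monomial `x^F` of a filling. -/
noncomputable def xwt (α : Fin n → ℕ) (G : Fill n α) : MvPolynomial ℕ (Polynomial ℤ) :=
  ∏ i : Fin n, ∏ j : Fin (α i), MvPolynomial.X ((G i j : ℕ) + 1)

open Classical in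
/-- `E^σ_α(x; q, 0) = Σ_{F coinversion-free} q^{maj F} x^F`. -/
noncomputable def Epoly (α σ : Fin n → ℕ) : MvPolynomial ℕ (Polynomial ℤ) :=
  ∑ G : Fill n α, if CoinvFree α (entry α σ G) then
    MvPolynomial.C (Polynomial.X ^ maj α (entry α σ G)) * xwt α G else 0

open Classical in
/-- `H̃^σ_α(x; q, 0) = Σ_{F inversion-free} q^{maj F} x^F`. -/
noncomputable def Hpoly (α σ : Fin n → ℕ) : MvPolynomial ℕ (Polynomial ℤ) :=
  ∑ G : Fill n α, if InvFree α (entry α σ G) then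
    MvPolynomial.C (Polynomial.X ^ maj α (entry α σ G)) * xwt α G else 0

/-! ## Tableaux and Schur polynomials -/

/-- A filling of the diagram of `ν` with entries in `Fin N` (values `1, …, N`). -/
abbrev Tab (m : ℕ) (ν : Fin m → ℕ) (N : ℕ) := (i : Fin m) → Fin (ν i) → Fin N

/-- Semistandardness: rows weakly increase, columns strictly increase. -/
def IsSSYT {m N : ℕ} (ν : Fin m → ℕ) (T : Tab m ν N) : Prop :=
  (∀ i : Fin m, ∀ j j' : Fin (ν i), j ≤ j' → T i j ≤ T i j') ∧
  (∀ i i' : Fin m, i < i' → ∀ j : Fin (ν i'), ∀ hj : (j : ℕ) < ν i, T i ⟨j, hj⟩ < T i' j)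

/-- Number of occurrences of the value `v` in the tableau. -/
def tabCount {m N : ℕ} (ν : Fin m → ℕ) (T : Tab m ν N) (v : Fin N) : ℕ :=
  ∑ i : Fin m, (Finset.univ.filter (fun j : Fin (ν i) => T i j = v)).card

/-- The monomial `x^T` of a tableau. -/
noncomputable def xwtTab {m N : ℕ} (ν : Fin m → ℕ) (T : Tab m ν N) :
    MvPolynomial ℕ (Polynomial ℤ) :=
  ∏ i : Fin m, ∏ j : Fin (ν i), MvPolynomial.X ((T i j : ℕ) + 1)

open Classical in
/-- The Schur polynomial `s_ν(x_1, …, x_N)` as the generating function of SSYT. -/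
noncomputable def schurPoly (m : ℕ) (ν : Fin m → ℕ) (N : ℕ) : MvPolynomial ℕ (Polynomial ℤ) :=
  ∑ T : Tab m ν N, if IsSSYT ν T then xwtTab ν T else 0

/-- The reading word of a tableau: rows left to right, bottom row first. -/
def readingWord {m N : ℕ} (ν : Fin m → ℕ) (T : Tab m ν N) : List ℕ :=
  ((List.finRange m).reverse).flatMap
    (fun i => (List.finRange (ν i)).map (fun j => (T i j : ℕ) + 1))

/-- The conjugate shape: `ν'_j = #{i : ν_i ≥ j}`. -/
def conjShape (m : ℕ) (ν : Fin m → ℕ) : Fin m → ℕ :=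
  fun j => (Finset.univ.filter (fun i => (j : ℕ) + 1 ≤ ν i)).card

/-! ## Charge and cocharge of words -/

/-- Minimum of a list, if nonempty. -/
def listMin : List ℕ → Option ℕ
  | [] => none
  | a :: t => match listMin t with
    | none => some a
    | some b => some (min a b)

/-- The major index of a list: the sum of the (1-indexed) positions of descents. -/
def majList (l : List ℕ) : ℕ :=
  (List.range (l.length - 1)).foldl
    (fun acc i => if l.getD (i+1) 0 < l.getD i 0 then acc + i + 1 else acc) 0

/-- The inverse of a word `w` that is a permutation of `1, …, k`:
its `v`-th letter is the (1-indexed) position of `v` in `w`. -/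
def invPerm (w : List ℕ) : List ℕ :=
  (List.range w.length).map (fun v => w.idxOf (v+1) + 1)

/-- Charge of a permutation word: `maj(reverse(w⁻¹))`. -/
def chargePerm (w : List ℕ) : ℕ := majList (invPerm w).reverse

/-- Cocharge of a permutation word: the binomial maximum minus the charge. -/
def cochargePerm (w : List ℕ) : ℕ := w.length.choose 2 - chargePerm w

/-- Largest index `< p` where `w` has the letter `t`. -/
def findBelow (w : List ℕ) (p t : ℕ) : Option ℕ :=
  ((List.range p).filter (fun i => w.getD i 0 == t)).getLast?

/-- Largest index where `w` has the letter `t` (used for wrap-around). -/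
def findAny (w : List ℕ) (t : ℕ) : Option ℕ :=
  ((List.range w.length).filter (fun i => w.getD i 0 == t)).getLast?

/-- Extraction scan: from position `p`, scanning right to left (wrapping around if
necessary) find the letter `t`, then continue with the next larger letter value. -/
def extractGo (w : List ℕ) : ℕ → ℕ → ℕ → List ℕ → List ℕ
  | 0, _, _, acc => acc
  | fuel+1, p, t, acc =>
    match (match findBelow w p t with | some i => some i | none => findAny w t) with
    | none => acc
    | some i =>
      match listMin (w.filter (fun x => decide (t < x))) with
      | none => i :: acc
      | some t' => extractGo w fuel i t' (i :: acc)

/-- Indices of the first standard subword of `w` (rightmost occurrence of the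
smallest letter, then the right-to-left wrap-around scan up to the largest letter). -/
def extractIndices (w : List ℕ) : List ℕ :=
  match listMin w with
  | none => []
  | some v0 => extractGo w w.length w.length v0 []

/-- The standard subword decomposition of a word (with fuel). -/
def subwordsGo : ℕ → List ℕ → List (List ℕ)
  | 0, _ => []
  | fuel+1, w =>
    if w.isEmpty then [] else
    let I := extractIndices w
    let sub := ((List.range w.length).filter (fun i => I.contains i)).map (fun i => w.getD i 0)
    let rest := ((List.range w.length).filter (fun i => !(I.contains i))).map (fun i => w.getD i 0)
    sub :: subwordsGo fuel rest

/-- The standard subwords of a word. -/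
def subwords (w : List ℕ) : List (List ℕ) := subwordsGo w.length w

/-- Charge of a word: the sum of the charges of its standard subwords. -/
def chargeWord (w : List ℕ) : ℕ := ((subwords w).map chargePerm).sum

/-- Cocharge of a word: the sum of the cocharges of its standard subwords. -/
def cochargeWord (w : List ℕ) : ℕ := ((subwords w).map cochargePerm).sum

/-- The charge word `cw(F)`: list the entries in increasing order (ties broken by
increasing column index) and record their column indices. -/
def cw (α σ : Fin n → ℕ) (G : Fill n α) : List ℕ :=
  (List.range n).flatMap (fun v =>
    (List.range (maxPart α)).filterMap (fun j =>
      if ∃ i : Fin n, j + 1 ≤ α i ∧ entry α σ G i (j+1) = v + 1 then some (j+1) else none))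

/-- The cocharge word `ccw(F)`: list the entries in decreasing order (ties broken by
increasing column index, with multiplicity) and record their column indices. -/
def ccw (α σ : Fin n → ℕ) (G : Fill n α) : List ℕ :=
  ((List.range n).reverse).flatMap (fun v =>
    (List.range (maxPart α)).flatMap (fun j =>
      List.replicate ((Finset.univ.filter
        (fun i : Fin n => j + 1 ≤ α i ∧ entry α σ G i (j+1) = v + 1)).card) (j+1)))

/-! ## Two-row fillings as lists (including the basement at index 0) -/

/-- The entry function of a two-row filling with top row `T` and bottom row `B`
(both including their basement entry at index 0). -/
def twoRowEntry (T B : List ℕ) : Fin 2 → ℕ → ℕ :=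
  fun i j => if i.val = 0 then T.getD j 0 else B.getD j 0

/-- The multiset of entries in column `j` of a two-row filling. -/
def colM (T B : List ℕ) (j : ℕ) : Multiset ℕ :=
  (if j < T.length then {T.getD j 0} else 0) + (if j < B.length then {B.getD j 0} else 0)

/-- The filling rule at a two-entry column `{A, B}` with bottom reference entry `C`,
returning (bottom entry, top entry): the least entry greater than `C` goes to the
bottom if one exists, otherwise the smallest entry goes to the bottom. -/
def phiRule (C A B : ℕ) : ℕ × ℕ :=
  if C < A ∧ C < B then (min A B, max A B)
  else if C < A then (A, B)
  else if C < B then (B, A)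
  else (min A B, max A B)

/-- Process the two-entry columns right to left (input and output reversed),
threading the current bottom reference entry `C`. -/
def phiPairs : List (ℕ × ℕ) → ℕ → List (ℕ × ℕ)
  | [], _ => []
  | (A, B) :: r, C =>
    let q := phiRule C A B
    q :: phiPairs r q.1

/-- The filling-rule map `φ` on a two-row filling with rows `T` (long, incl. basement)
and `B` (short, incl. basement): single-entry columns go to the bottom row, two-entry
columns are resolved by `phiRule`, processing right to left.
Returns (new long bottom row, new short top row). -/
def phi (T B : List ℕ) : List ℕ × List ℕ :=
  let k := B.length
  let tail := T.drop k
  let C0 := T.getD k 0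
  let res := (phiPairs ((T.take k).zip B).reverse C0).reverse
  (res.map Prod.fst ++ tail, res.map Prod.snd)

/-! For a partition shape no type B triple exists, and the type A triples inside column `j + 1`
say that, read top to bottom, each entry comes first in the cyclic order downward from its left
neighbour among the entries of the column set not used higher up (`InvTriple`). That is exactly
the greedy choice, so every column is forced by the previous one and its set, and the greedy
columns, built from the basement, satisfy all the conditions. -/

/-- Reading the values cyclically downward from `a` (`a, a - 1, …, 0`, then from the largest
value down to `a + 1`), `b` comes strictly before `c`. -/
def InvTriple (a b c : ℕ) : Prop :=
  (b ≤ a ∧ a < c) ∨ (a < c ∧ c < b) ∨ (c < b ∧ b ≤ a)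

lemma invA_iff_invTriple (F : Fin n → ℕ → ℕ) (r r' : Fin n) (j : ℕ) :
    invA F r r' j ↔ InvTriple (F r (j - 1)) (F r j) (F r' j) := by
  unfold invA cyc tlt InvTriple
  omega

lemma InvTriple.not_swap {a b c : ℕ} (h : InvTriple a b c) : ¬ InvTriple a c b := by
  unfold InvTriple at *
  omega

noncomputable def greedyPick (S : Finset ℕ) (a : ℕ) : ℕ :=
  if h : (S.filter (· ≤ a)).Nonempty then (S.filter (· ≤ a)).max' h
  else if h' : S.Nonempty then S.max' h' else 0

lemma greedyPick_mem {S : Finset ℕ} (hS : S.Nonempty) (a : ℕ) : greedyPick S a ∈ S := by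
  unfold greedyPick
  split_ifs with h
  · exact (Finset.mem_filter.mp ((S.filter (· ≤ a)).max'_mem h)).1
  · exact S.max'_mem hS

lemma invTriple_greedyPick {S : Finset ℕ} {a c : ℕ} (hc : c ∈ S) (hne : c ≠ greedyPick S a) :
    InvTriple a (greedyPick S a) c := by
  unfold greedyPick at hne ⊢
  split_ifs at hne ⊢ with h h'
  · have hmax := Finset.mem_filter.mp ((S.filter (· ≤ a)).max'_mem h)
    have hle : c ≤ a → c ≤ (S.filter (· ≤ a)).max' h := fun hca =>
      (S.filter (· ≤ a)).le_max' c (Finset.mem_filter.mpr ⟨hc, hca⟩)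
    unfold InvTriple
    omega
  · have hac : a < c := not_le.mp fun hca => h ⟨c, Finset.mem_filter.mpr ⟨hc, hca⟩⟩
    have hmax : a < S.max' ⟨c, hc⟩ := hac.trans_le (S.le_max' c hc)
    have hle := S.le_max' c hc
    unfold InvTriple
    omega
  · exact absurd ⟨c, hc⟩ h'

lemma forall_invTriple_iff_eq_greedyPick {S : Finset ℕ} {a b : ℕ} (hb : b ∈ S) :
    (∀ c ∈ S, c ≠ b → InvTriple a b c) ↔ b = greedyPick S a := by
  constructor
  · intro h
    by_contra hne
    have hp := greedyPick_mem ⟨b, hb⟩ a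
    exact (h _ hp (Ne.symm hne)).not_swap (invTriple_greedyPick hb hne)
  · rintro rfl c hc hne
    exact invTriple_greedyPick hc hne

/-- `a r` is the left neighbour of row `r`; rows are filled top to bottom. -/
noncomputable def greedyColumn : ℕ → (ℕ → ℕ) → Finset ℕ → ℕ → ℕ
  | 0, _, _, _ => 0
  | _ + 1, a, S, 0 => greedyPick S (a 0)
  | m + 1, a, S, r + 1 => greedyColumn m (fun k => a (k + 1)) (S.erase (greedyPick S (a 0))) r

def IsCoinvColumn (m : ℕ) (a : ℕ → ℕ) (S : Finset ℕ) (b : ℕ → ℕ) : Prop :=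
  (Finset.range m).image b = S ∧ ∀ r r', r < r' → r' < m → InvTriple (a r) (b r) (b r')

lemma image_range_succ (b : ℕ → ℕ) (m : ℕ) :
    (Finset.range (m + 1)).image b = insert (b 0) ((Finset.range m).image fun r => b (r + 1)) := by
  rw [Finset.range_add_one', Finset.image_insert, Finset.map_eq_image, Finset.image_image]
  rfl

lemma isCoinvColumn_succ_iff {m : ℕ} {a : ℕ → ℕ} {S : Finset ℕ} {b : ℕ → ℕ}
    (hS : S.card = m + 1) :
    IsCoinvColumn (m + 1) a S b ↔ b 0 = greedyPick S (a 0) ∧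
      IsCoinvColumn m (fun r => a (r + 1)) (S.erase (b 0)) (fun r => b (r + 1)) := by
  set T := (Finset.range m).image fun r => b (r + 1)
  have hT : T.card ≤ m := Finset.card_image_le.trans (Finset.card_range m).le
  have hcond : (∀ r r', r < r' → r' < m + 1 → InvTriple (a r) (b r) (b r')) ↔
      (∀ r' < m, InvTriple (a 0) (b 0) (b (r' + 1))) ∧
        ∀ r r', r < r' → r' < m → InvTriple (a (r + 1)) (b (r + 1)) (b (r' + 1)) := by
    constructor
    · intro h
      exact ⟨fun r' hr' => h 0 (r' + 1) (by omega) (by omega),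
        fun r r' hrr' hr' => h (r + 1) (r' + 1) (by omega) (by omega)⟩
    · rintro ⟨h0, h⟩ (_ | r) (_ | r') hrr' hr'
      · omega
      · exact h0 r' (by omega)
      · omega
      · exact h r r' (by omega) (by omega)
  unfold IsCoinvColumn
  rw [image_range_succ, hcond]
  constructor
  · rintro ⟨himg, h0, h⟩
    have hbT : b 0 ∉ T := fun hmem => by
      rw [Finset.insert_eq_of_mem hmem] at himg
      have := congrArg Finset.card himg
      omega
    refine ⟨(forall_invTriple_iff_eq_greedyPick (himg ▸ Finset.mem_insert_self _ _)).mp ?_,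
      by rw [← himg, Finset.erase_insert hbT], h⟩
    intro c hc hcb
    rw [← himg, Finset.mem_insert] at hc
    obtain ⟨r', hr', rfl⟩ := Finset.mem_image.mp (hc.resolve_left hcb)
    exact h0 r' (Finset.mem_range.mp hr')
  · rintro ⟨hb0, himg, h⟩
    have hb0S : b 0 ∈ S := hb0 ▸ greedyPick_mem (Finset.card_pos.mp (by omega)) (a 0)
    refine ⟨by rw [himg, Finset.insert_erase hb0S], fun r' hr' => ?_, h⟩
    have hmem : b (r' + 1) ∈ S.erase (b 0) :=
      himg ▸ Finset.mem_image_of_mem _ (Finset.mem_range.mpr hr')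
    rw [hb0] at hmem ⊢
    exact invTriple_greedyPick (Finset.mem_of_mem_erase hmem) (Finset.ne_of_mem_erase hmem)

lemma isCoinvColumn_iff {m : ℕ} {a : ℕ → ℕ} {S : Finset ℕ} {b : ℕ → ℕ} (hS : S.card = m) :
    IsCoinvColumn m a S b ↔ ∀ r < m, b r = greedyColumn m a S r := by
  induction m generalizing a S b with
  | zero =>
    simp [IsCoinvColumn, Finset.card_eq_zero.mp hS]
  | succ m ih =>
    rw [isCoinvColumn_succ_iff hS]
    constructor
    · rintro ⟨hb0, hrest⟩ (_ | r) hr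
      · exact hb0
      · have hcard : (S.erase (b 0)).card = m := by
          rw [Finset.card_erase_of_mem (hb0 ▸ greedyPick_mem (Finset.card_pos.mp (by omega)) _), hS]
          rfl
        rw [ih hcard] at hrest
        simpa [greedyColumn, hb0] using hrest r (by omega)
    · intro h
      have hb0 : b 0 = greedyPick S (a 0) := h 0 (by omega)
      refine ⟨hb0, ?_⟩
      have hcard : (S.erase (b 0)).card = m := by
        rw [Finset.card_erase_of_mem (hb0 ▸ greedyPick_mem (Finset.card_pos.mp (by omega)) _), hS]
        rfl
      rw [ih hcard]
      intro r hr
      simpa [greedyColumn, hb0] using h (r + 1) (by omega)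

lemma isCoinvColumn_congr {m : ℕ} {a a' : ℕ → ℕ} {S : Finset ℕ} {b b' : ℕ → ℕ}
    (ha : ∀ r < m, a r = a' r) (hb : ∀ r < m, b r = b' r) :
    IsCoinvColumn m a S b ↔ IsCoinvColumn m a' S b' := by
  unfold IsCoinvColumn
  rw [Finset.image_congr fun r hr => hb r (Finset.mem_range.mp hr)]
  refine and_congr_right fun _ => forall₄_congr fun r r' hrr' hr' => ?_
  rw [ha r (hrr'.trans hr'), hb r (hrr'.trans hr'), hb r' hr']

section Filling

variable {lam : Fin n → ℕ}

def colLength (lam : Fin n → ℕ) (j : ℕ) : ℕ :=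
  (Finset.univ.filter fun i : Fin n => j ≤ lam i).card

lemma colLength_antitone (lam : Fin n → ℕ) : Antitone (colLength lam) := fun _ _ hjj' =>
  Finset.card_le_card fun _ hi => Finset.mem_filter.mpr
    ⟨Finset.mem_univ _, hjj'.trans (Finset.mem_filter.mp hi).2⟩

lemma colLength_le (lam : Fin n → ℕ) (j : ℕ) : colLength lam j ≤ n := by
  simpa [colLength] using colLength_antitone lam (Nat.zero_le j)

lemma le_iff_lt_colLength (hlam : Antitone lam) (j : ℕ) (i : Fin n) :
    j ≤ lam i ↔ (i : ℕ) < colLength lam j := by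
  constructor
  · intro hj
    have hsub : Finset.Iic i ⊆ Finset.univ.filter fun k : Fin n => j ≤ lam k :=
      fun k hk => Finset.mem_filter.mpr ⟨Finset.mem_univ k, hj.trans (hlam (Finset.mem_Iic.mp hk))⟩
    have := Finset.card_le_card hsub
    rw [Fin.card_Iic] at this
    exact this
  · intro hi
    by_contra hj
    have hsub : (Finset.univ.filter fun k : Fin n => j ≤ lam k) ⊆ Finset.Iio i := fun k hk =>
      Finset.mem_Iio.mpr (lt_of_not_ge fun hik => hj ((Finset.mem_filter.mp hk).2.trans (hlam hik)))
    have := Finset.card_le_card hsub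
    rw [Fin.card_Iio] at this
    exact absurd hi this.not_gt

/-- Column `j` as a function of the row index, with junk value `0` at rows `r ≥ n`. -/
def column (σ : Fin n → ℕ) (G : Fill n lam) (j r : ℕ) : ℕ :=
  if h : r < n then entry lam σ G ⟨r, h⟩ j else 0

lemma column_fin (σ : Fin n → ℕ) (G : Fill n lam) (j : ℕ) (i : Fin n) :
    column σ G j i = entry lam σ G i j := by
  simp [column]

lemma entry_succ (σ : Fin n → ℕ) (G : Fill n lam) (i : Fin n) {j : ℕ} (hj : j < lam i) :
    entry lam σ G i (j + 1) = G i ⟨j, hj⟩ + 1 := by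
  simp [entry, hj]

lemma colFinset_eq_image_column (hlam : Antitone lam) (σ : Fin n → ℕ) (G : Fill n lam) (j : ℕ) :
    colFinset lam σ G j = (Finset.range (colLength lam j)).image (column σ G j) := by
  ext x
  simp only [colFinset, Finset.mem_image, Finset.mem_filter, Finset.mem_univ, true_and,
    Finset.mem_range]
  constructor
  · rintro ⟨i, hi, rfl⟩
    exact ⟨i, (le_iff_lt_colLength hlam j i).mp hi, column_fin σ G j i⟩
  · rintro ⟨r, hr, rfl⟩
    let i : Fin n := ⟨r, hr.trans_le (colLength_le lam j)⟩
    exact ⟨i, (le_iff_lt_colLength hlam j i).mpr hr, (column_fin σ G j i).symm⟩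

lemma coinvFree_iff (hlam : Antitone lam) (σ : Fin n → ℕ) (G : Fill n lam) :
    CoinvFree lam (entry lam σ G) ↔ ∀ j r r', r < r' → r' < colLength lam (j + 1) →
      InvTriple (column σ G j r) (column σ G (j + 1) r) (column σ G (j + 1) r') := by
  have hB : ∀ r r' j, ¬ typeB lam r r' j := fun r r' j ⟨hr'r, _, _, _, hlt⟩ =>
    (hlam hr'r.le).not_gt hlt
  simp only [CoinvFree, hB, false_imp_iff, implies_true, and_true]
  constructor
  · intro hA j r r' hrr' hr'
    obtain ⟨i', rfl⟩ : ∃ i' : Fin n, (i' : ℕ) = r' :=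
      ⟨⟨r', hr'.trans_le (colLength_le lam _)⟩, rfl⟩
    obtain ⟨i, rfl⟩ : ∃ i : Fin n, (i : ℕ) = r := ⟨⟨r, hrr'.trans i'.isLt⟩, rfl⟩
    have hi' := (le_iff_lt_colLength hlam _ i').mpr hr'
    have hi := (le_iff_lt_colLength hlam _ i).mpr (hrr'.trans hr')
    have := (invA_iff_invTriple _ _ _ _).mp (hA i i' (j + 1) ⟨hrr', by omega, hi, hi', hlam hrr'.le⟩)
    simpa only [column_fin, Nat.add_sub_cancel] using this
  · rintro h i i' j ⟨hii', hj, hi, hi', -⟩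
    obtain ⟨j, rfl⟩ : ∃ j', j = j' + 1 := ⟨j - 1, by omega⟩
    rw [invA_iff_invTriple, Nat.add_sub_cancel]
    simpa only [column_fin] using
      h j i i' hii' ((le_iff_lt_colLength hlam _ i').mp hi')

lemma coinvFree_and_colFinset_iff (hlam : Antitone lam) (σ : Fin n → ℕ) (C : ℕ → Finset ℕ)
    (G : Fill n lam) :
    (CoinvFree lam (entry lam σ G) ∧ ∀ j, 1 ≤ j → colFinset lam σ G j = C j) ↔
      ∀ j, IsCoinvColumn (colLength lam (j + 1)) (column σ G j) (C (j + 1))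
        (column σ G (j + 1)) := by
  simp only [IsCoinvColumn, forall_and, coinvFree_iff hlam, ← colFinset_eq_image_column hlam]
  refine and_comm.trans (and_congr_left' ⟨fun h j => h (j + 1) j.succ_pos, fun h j hj => ?_⟩)
  obtain ⟨j, rfl⟩ : ∃ j', j = j' + 1 := ⟨j - 1, by omega⟩
  exact h j

noncomputable def greedyColumns (lam σ : Fin n → ℕ) (C : ℕ → Finset ℕ) : ℕ → ℕ → ℕ
  | 0 => fun r => if h : r < n then σ ⟨r, h⟩ else 0
  | j + 1 => greedyColumn (colLength lam (j + 1)) (greedyColumns lam σ C j) (C (j + 1))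

lemma column_zero (σ : Fin n → ℕ) (C : ℕ → Finset ℕ) (G : Fill n lam) :
    column σ G 0 = greedyColumns lam σ C 0 := by
  funext r
  simp [column, entry, greedyColumns]

lemma isCoinvColumn_greedyColumns (σ : Fin n → ℕ) {C : ℕ → Finset ℕ}
    (hC : ∀ j, (C (j + 1)).card = colLength lam (j + 1)) (j : ℕ) :
    IsCoinvColumn (colLength lam (j + 1)) (greedyColumns lam σ C j) (C (j + 1))
      (greedyColumns lam σ C (j + 1)) :=
  (isCoinvColumn_iff (hC j)).mpr fun _ _ => rfl

lemma coinvFree_and_colFinset_iff_column_eq (hlam : Antitone lam) (σ : Fin n → ℕ)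
    {C : ℕ → Finset ℕ} (hC : ∀ j, (C (j + 1)).card = colLength lam (j + 1)) (G : Fill n lam) :
    (CoinvFree lam (entry lam σ G) ∧ ∀ j, 1 ≤ j → colFinset lam σ G j = C j) ↔
      ∀ j, ∀ r < colLength lam j, column σ G j r = greedyColumns lam σ C j r := by
  rw [coinvFree_and_colFinset_iff hlam]
  constructor
  · intro h j
    induction j with
    | zero => exact fun r _ => congrFun (column_zero σ C G) r
    | succ j ih =>
      have hcol := h j
      rwa [isCoinvColumn_congr (fun r hr => ih r (hr.trans_le (colLength_antitone lam j.le_succ)))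
        (fun _ _ => rfl), isCoinvColumn_iff (hC j)] at hcol
  · intro h j
    exact (isCoinvColumn_congr
      (fun r hr => h j r (hr.trans_le (colLength_antitone lam j.le_succ))) (h (j + 1))).mpr
      (isCoinvColumn_greedyColumns σ hC j)

/-- The clamp only makes the definition total; it is inactive on values in `1, …, n`. -/
def ofColumns (f : ℕ → ℕ → ℕ) : Fill n lam :=
  fun i k => ⟨min (f (k + 1) i - 1) (n - 1), by have := i.isLt; omega⟩

lemma column_ofColumns (hlam : Antitone lam) (σ : Fin n → ℕ) {f : ℕ → ℕ → ℕ} {j r : ℕ}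
    (hr : r < colLength lam (j + 1)) (hf : f (j + 1) r ∈ Finset.Icc 1 n) :
    column σ (ofColumns (lam := lam) f) (j + 1) r = f (j + 1) r := by
  obtain ⟨i, rfl⟩ : ∃ i : Fin n, (i : ℕ) = r := ⟨⟨r, hr.trans_le (colLength_le lam _)⟩, rfl⟩
  rw [Finset.mem_Icc] at hf
  rw [column_fin, entry_succ σ _ i ((le_iff_lt_colLength hlam _ i).mpr hr)]
  simp only [ofColumns]
  omega

lemma eq_of_column_eq (hlam : Antitone lam) (σ : Fin n → ℕ) {G G' : Fill n lam}
    (h : ∀ j, ∀ r < colLength lam (j + 1), column σ G (j + 1) r = column σ G' (j + 1) r) :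
    G = G' := by
  funext i k
  have := h k i ((le_iff_lt_colLength hlam _ i).mp k.isLt)
  rw [column_fin, column_fin, entry_succ σ G i k.isLt, entry_succ σ G' i k.isLt, Fin.eta] at this
  exact Fin.ext (by omega)

end Filling

/-- For a partition shape and the key basement, any compatible list of column sets
is realized by exactly one coinversion-free filling. -/
theorem unique_coinvfree_filling_with_column_sets (n : ℕ) (lam : Fin n → ℕ)
    (hlam : ∀ i j : Fin n, i ≤ j → lam j ≤ lam i) (C : ℕ → Finset ℕ)
    (hCsub : ∀ j, 1 ≤ j → C j ⊆ Finset.Icc 1 n)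
    (hCcard : ∀ j, 1 ≤ j →
      (C j).card = (Finset.univ.filter (fun i : Fin n => j ≤ lam i)).card) :
    ∃! G : Fill n lam, CoinvFree lam (entry lam (keyBasement n) G) ∧
      ∀ j, 1 ≤ j → colFinset lam (keyBasement n) G j = C j := by
  have hC : ∀ j, (C (j + 1)).card = colLength lam (j + 1) := fun j => hCcard (j + 1) j.succ_pos
  have hchar := coinvFree_and_colFinset_iff_column_eq hlam (keyBasement n) hC
  set g := greedyColumns lam (keyBasement n) C
  have hgreedy : ∀ j, ∀ r < colLength lam j,
      column (keyBasement n) (ofColumns (lam := lam) g) j r = g j r := by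
    rintro (_ | j) r hr
    · exact congrFun (column_zero _ C _) r
    · refine column_ofColumns hlam _ hr (hCsub (j + 1) j.succ_pos ?_)
      rw [← (isCoinvColumn_greedyColumns _ hC j).1]
      exact Finset.mem_image_of_mem _ (Finset.mem_range.mpr hr)
  refine ⟨ofColumns g, (hchar _).mpr hgreedy, fun G hG => eq_of_column_eq hlam (keyBasement n) ?_⟩
  intro j r hr
  rw [(hchar G).mp hG (j + 1) r hr, hgreedy (j + 1) r hr]

end Paper
end

section
/- Let α = (α_1, α_2) with α_1 > α_2 ≥ 1 and let σ = (σ_1, σ_2) be a big basement with σ_1 > σ_2 (basement entries larger than all filling entries). There is a bijection φ between inversion-free two-row fillings of shape α with big basement σ and inversion-free two-row fillings of shape (α_2, α_1) with big basement (σ_2, σ_1), which preserves the multiset of entries in each column and preserves the major index. -/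
namespace Paper

variable {n : ℕ}

/-!
In an inversion-free two-row filling with a big basement, a column shared by both rows is
determined by its two entries and one neighbouring entry of the long row. For shape `(a₁, a₂)`
(long row on top) the long-row entry is the least entry exceeding its left neighbour, or the least
entry, so the shared columns are oriented left to right starting from the basement; for shape
`(a₂, a₁)` it is the largest entry below its right neighbour, or the largest entry, so they are
oriented right to left starting from the first single-entry column. Both families are therefore
parametrised by the column multisets, and `φ` just re-orients the shared columns.

The major index of a row is the sum over its prefixes of their numbers of ascents. For every
prefix of the shared columns the two orientations have the same total number of ascents in the two
rows, by induction on the prefix from a case analysis of adjacent columns; and the long rows have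
the same number of ascents up to the first single-entry column, which accounts for the weight the
single-entry columns add to the earlier ascents.
-/

/-- `NoInv a b c`: the triple with left entry `a`, right entry `b` in the same row and third
entry `c` (type A: below `b`; type B: above `a`) is not an inversion triple. -/
def NoInv (a b c : ℕ) : Prop := (b ≤ c ∧ c ≤ a) ∨ (c ≤ a ∧ a < b) ∨ (a < b ∧ b ≤ c)

lemma not_cyc_iff_noInv (a b c : ℕ) : ¬ cyc (b, 1) (a, 3) (c, 2) ↔ NoInv a b c := by
  unfold cyc tlt NoInv
  omega

lemma cyc_rotate (x y z : ℕ × ℕ) : cyc z x y ↔ cyc x y z := by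
  unfold cyc
  tauto

lemma invFree_longTop_iff_noInv {a k : ℕ} (hk : k ≤ a) (L S : List ℕ) :
    InvFree ![a, k] (twoRowEntry L S) ↔
      ∀ j, 1 ≤ j → j ≤ k → NoInv (L.getD (j - 1) 0) (L.getD j 0) (S.getD j 0) := by
  simp only [InvFree, Nat.succ_eq_add_one, Nat.reduceAdd, typeA, invA, twoRowEntry,
    Fin.val_eq_zero_iff, Fin.isValue, List.getD_eq_getElem?_getD, and_imp, Fin.forall_fin_two,
    not_lt_zero, Matrix.cons_val_zero, ↓reduceIte, IsEmpty.forall_iff, implies_true,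
    Fin.lt_one_iff, Matrix.cons_val_one, Matrix.cons_val_fin_one, one_ne_zero, true_and,
    forall_const, Std.le_refl, forall_self_imp, and_true, typeB, tsub_le_iff_right, invB,
    lt_self_iff_false, and_self, zero_lt_one, ← not_cyc_iff_noInv]
  exact ⟨fun h j h1 h2 => h.1 j h1 (by omega) h2 hk,
    fun h => ⟨fun j h1 _ h2 _ => h j h1 h2, fun _ _ _ _ hak => absurd hak (by omega)⟩⟩

lemma invFree_longBottom_iff_noInv {a k : ℕ} (hk : k < a) (S L : List ℕ) :
    InvFree ![k, a] (twoRowEntry S L) ↔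
      ∀ j, 1 ≤ j → j ≤ k + 1 → NoInv (L.getD (j - 1) 0) (L.getD j 0) (S.getD (j - 1) 0) := by
  simp only [InvFree, Nat.succ_eq_add_one, Nat.reduceAdd, typeA, invA, twoRowEntry,
    Fin.val_eq_zero_iff, Fin.isValue, List.getD_eq_getElem?_getD, and_imp, Fin.forall_fin_two,
    not_lt_zero, Matrix.cons_val_zero, ↓reduceIte, IsEmpty.forall_iff, implies_true,
    Fin.lt_one_iff, Matrix.cons_val_one, Matrix.cons_val_fin_one, one_ne_zero, true_and,
    forall_const, Std.le_refl, forall_self_imp, and_true, typeB, tsub_le_iff_right, invB,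
    cyc_rotate, lt_self_iff_false, and_self, zero_lt_one, ← not_cyc_iff_noInv]
  exact ⟨fun h j h1 h2 => h.2 j h1 (by omega) h2 hk,
    fun h => ⟨fun _ _ _ _ hak => absurd hak (by omega), fun j h1 _ h2 _ => h j h1 h2⟩⟩

/-- Columns shared by both rows are pairs `(long-row entry, short-row entry)`. With the long row on
top, the long-row entry is the least entry exceeding its left neighbour `a`, if any, and the least
entry otherwise. -/
def placeLeft (a : ℕ) (p : ℕ × ℕ) : ℕ × ℕ :=
  if a < p.1 ∧ p.2 ≤ a then p else if a < p.2 ∧ p.1 ≤ a then p.swap else (min p.1 p.2, max p.1 p.2)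

/-- With the long row at the bottom, the long-row entry is the largest entry below its right
neighbour `c`, if any, and the largest entry otherwise. -/
def placeRight (c : ℕ) (p : ℕ × ℕ) : ℕ × ℕ :=
  if p.1 < c ∧ c ≤ p.2 then p else if p.2 < c ∧ c ≤ p.1 then p.swap else (max p.1 p.2, min p.1 p.2)

def SameCol (p q : ℕ × ℕ) : Prop := q = p ∨ q = p.swap

lemma SameCol.symm {p q : ℕ × ℕ} (h : SameCol p q) : SameCol q p := by
  rcases h with rfl | rfl <;> simp [SameCol]

lemma SameCol.trans {p q r : ℕ × ℕ} (hpq : SameCol p q) (hqr : SameCol q r) : SameCol p r := by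
  rcases hpq with rfl | rfl <;> rcases hqr with rfl | rfl <;> simp [SameCol]

lemma SameCol.imp {B : ℕ → Prop} {p q : ℕ × ℕ} (h : SameCol p q) (hp : B p.1 ∧ B p.2) :
    B q.1 ∧ B q.2 := by
  rcases h with rfl | rfl
  exacts [hp, hp.symm]

lemma sameCol_placeLeft (a : ℕ) (p : ℕ × ℕ) : SameCol p (placeLeft a p) := by
  obtain ⟨x, y⟩ := p
  unfold SameCol placeLeft
  split_ifs <;> simp; omega

lemma sameCol_placeRight (c : ℕ) (p : ℕ × ℕ) : SameCol p (placeRight c p) := by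
  obtain ⟨x, y⟩ := p
  unfold SameCol placeRight
  split_ifs <;> simp; omega

lemma placeLeft_swap (a : ℕ) (p : ℕ × ℕ) : placeLeft a p.swap = placeLeft a p := by
  obtain ⟨x, y⟩ := p
  simp only [placeLeft, Prod.swap_prod_mk]
  split_ifs <;> simp <;> omega

lemma placeRight_swap (c : ℕ) (p : ℕ × ℕ) : placeRight c p.swap = placeRight c p := by
  obtain ⟨x, y⟩ := p
  simp only [placeRight, Prod.swap_prod_mk]
  split_ifs <;> simp <;> omega

lemma placeLeft_eq_self_iff (a : ℕ) (p : ℕ × ℕ) : placeLeft a p = p ↔ NoInv a p.1 p.2 := by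
  obtain ⟨x, y⟩ := p
  unfold placeLeft NoInv
  split_ifs <;> simp <;> omega

lemma placeRight_eq_self_iff (c : ℕ) (p : ℕ × ℕ) : placeRight c p = p ↔ NoInv p.1 c p.2 := by
  obtain ⟨x, y⟩ := p
  unfold placeRight NoInv
  split_ifs <;> simp <;> omega

lemma noInv_placeLeft (a : ℕ) (p : ℕ × ℕ) : NoInv a (placeLeft a p).1 (placeLeft a p).2 := by
  obtain ⟨x, y⟩ := p
  unfold placeLeft NoInv
  split_ifs <;> simp <;> omega

lemma noInv_placeRight (c : ℕ) (p : ℕ × ℕ) :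
    NoInv (placeRight c p).1 c (placeRight c p).2 := by
  obtain ⟨x, y⟩ := p
  unfold placeRight NoInv
  split_ifs <;> simp <;> omega

def scanCols (f : ℕ → ℕ × ℕ → ℕ × ℕ) : ℕ → List (ℕ × ℕ) → List (ℕ × ℕ)
  | _, [] => []
  | c, p :: l => f c p :: scanCols f (f c p).1 l

section scanCols

variable {f : ℕ → ℕ × ℕ → ℕ × ℕ}

lemma forall₂_sameCol_comm {l m : List (ℕ × ℕ)} (h : List.Forall₂ SameCol l m) :
    List.Forall₂ SameCol m l :=
  h.flip.imp fun _ _ h => SameCol.symm h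

lemma forall₂_sameCol_scanCols (hf : ∀ c p, SameCol p (f c p)) (c : ℕ) (l : List (ℕ × ℕ)) :
    List.Forall₂ SameCol l (scanCols f c l) := by
  induction l generalizing c with
  | nil => exact .nil
  | cons p l ih => exact .cons (hf c p) (ih _)

lemma scanCols_congr (hf : ∀ c p, f c p.swap = f c p) {l m : List (ℕ × ℕ)}
    (h : List.Forall₂ SameCol l m) (c : ℕ) : scanCols f c l = scanCols f c m := by
  induction h generalizing c with
  | nil => rfl
  | @cons p q l m hpq _ ih =>
    have hfpq : f c q = f c p := by rcases hpq with rfl | rfl <;> simp [hf]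
    simp only [scanCols, hfpq, ih]

lemma scanCols_eq_self_iff {R : ℕ → ℕ × ℕ → Prop} (hR : ∀ c p, f c p = p ↔ R c p)
    (c d : ℕ) (l : List (ℕ × ℕ)) :
    scanCols f c l = l ↔ List.IsChain (fun x y => R x.1 y) ((c, d) :: l) := by
  induction l generalizing c d with
  | nil => simp [scanCols]
  | cons p l ih =>
    simp only [scanCols, List.cons.injEq, List.isChain_cons_cons]
    rw [← hR c p]
    constructor
    · rintro ⟨hp, hl⟩
      rw [hp] at hl
      exact ⟨hp, (ih p.1 p.2).mp hl⟩
    · rintro ⟨hp, hl⟩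
      rw [hp]
      exact ⟨rfl, (ih p.1 p.2).mpr hl⟩

lemma scanCols_append_singleton (c : ℕ) (l : List (ℕ × ℕ)) (p : ℕ × ℕ) :
    scanCols f c (l ++ [p]) =
      scanCols f c l ++ [f (((scanCols f c l).map Prod.fst).getLastD c) p] := by
  induction l generalizing c with
  | nil => rfl
  | cons q l ih => simp only [List.cons_append, scanCols, ih, List.map_cons, List.getLastD_cons]

end scanCols

def orientLeft (P : ℕ) (l : List (ℕ × ℕ)) : List (ℕ × ℕ) := scanCols placeLeft P l

def orientRight (l : List (ℕ × ℕ)) (t : ℕ) : List (ℕ × ℕ) :=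
  (scanCols placeRight t l.reverse).reverse

lemma forall₂_sameCol_orientLeft (P : ℕ) (l : List (ℕ × ℕ)) :
    List.Forall₂ SameCol l (orientLeft P l) :=
  forall₂_sameCol_scanCols sameCol_placeLeft P l

lemma forall₂_sameCol_orientRight (l : List (ℕ × ℕ)) (t : ℕ) :
    List.Forall₂ SameCol l (orientRight l t) := by
  rw [orientRight, ← List.forall₂_reverse_iff, List.reverse_reverse]
  exact forall₂_sameCol_scanCols sameCol_placeRight t _

lemma length_orientLeft (P : ℕ) (l : List (ℕ × ℕ)) : (orientLeft P l).length = l.length :=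
  (forall₂_sameCol_orientLeft P l).length_eq.symm

lemma length_orientRight (l : List (ℕ × ℕ)) (t : ℕ) : (orientRight l t).length = l.length :=
  (forall₂_sameCol_orientRight l t).length_eq.symm

lemma orientLeft_congr {l m : List (ℕ × ℕ)} (h : List.Forall₂ SameCol l m) (P : ℕ) :
    orientLeft P l = orientLeft P m :=
  scanCols_congr placeLeft_swap h P

lemma orientRight_congr {l m : List (ℕ × ℕ)} (h : List.Forall₂ SameCol l m) (t : ℕ) :
    orientRight l t = orientRight m t := by
  rw [orientRight, orientRight, scanCols_congr placeRight_swap (List.forall₂_reverse_iff.mpr h)]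

lemma orientLeft_eq_self_iff (P d : ℕ) (l : List (ℕ × ℕ)) :
    orientLeft P l = l ↔ List.IsChain (fun x y => NoInv x.1 y.1 y.2) ((P, d) :: l) :=
  scanCols_eq_self_iff placeLeft_eq_self_iff P d l

lemma orientRight_eq_self_iff (t d : ℕ) (l : List (ℕ × ℕ)) :
    orientRight l t = l ↔ List.IsChain (fun x y => NoInv x.1 y.1 x.2) (l ++ [(t, d)]) := by
  rw [orientRight, List.reverse_eq_iff, scanCols_eq_self_iff placeRight_eq_self_iff t d,
    ← List.isChain_reverse]
  simp

lemma orientLeft_append_singleton (P : ℕ) (l : List (ℕ × ℕ)) (p : ℕ × ℕ) :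
    orientLeft P (l ++ [p]) =
      orientLeft P l ++ [placeLeft (((orientLeft P l).map Prod.fst).getLastD P) p] :=
  scanCols_append_singleton P l p

lemma orientRight_append_singleton (l : List (ℕ × ℕ)) (p : ℕ × ℕ) (t : ℕ) :
    orientRight (l ++ [p]) t = orientRight l (placeRight t p).1 ++ [placeRight t p] := by
  simp [orientRight, scanCols]

lemma invFree_longTop_iff_orientLeft_eq {a k P Q : ℕ} (hk : k ≤ a) {T B : List ℕ}
    (hT : k ≤ T.length) (hB : B.length = k) :
    InvFree ![a, k] (twoRowEntry (P :: T) (Q :: B)) ↔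
      orientLeft P ((T.take k).zip B) = (T.take k).zip B := by
  have hcols : (P, Q) :: (T.take k).zip B = ((P :: T).take (k + 1)).zip (Q :: B) := rfl
  rw [invFree_longTop_iff_noInv hk, orientLeft_eq_self_iff P Q, hcols, List.isChain_iff_getElem]
  simp only [List.getElem_zip, List.getElem_take, List.length_zip, List.length_take,
    List.length_cons]
  constructor
  · intro h i hi
    have := h (i + 1) (by omega) (by omega)
    simpa [List.getElem?_eq_getElem (show i < (P :: T).length by simp; omega),
      List.getElem?_eq_getElem (show i < T.length by omega),
      List.getElem?_eq_getElem (show i < B.length by omega)] using this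
  · intro h j h1 h2
    obtain ⟨i, rfl⟩ : ∃ i, j = i + 1 := ⟨j - 1, by omega⟩
    have := h i (by omega)
    simpa [List.getElem?_eq_getElem (show i < (P :: T).length by simp; omega),
      List.getElem?_eq_getElem (show i < T.length by omega),
      List.getElem?_eq_getElem (show i < B.length by omega)] using this

lemma invFree_longBottom_iff_orientRight_eq {a k P Q : ℕ} (hk : k < a) (hQP : Q ≤ P) {S L : List ℕ}
    (hS : S.length = k) (hL : k < L.length) (hLQ : ∀ x ∈ L, x ≤ Q) :
    InvFree ![k, a] (twoRowEntry (Q :: S) (P :: L)) ↔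
      orientRight ((L.take k).zip S) ((L.drop k).headD 0) = (L.take k).zip S := by
  rw [List.headD_eq_head?_getD, List.head?_drop, ← List.getD_eq_getElem?_getD]
  have hcols : (L.take k).zip S ++ [(L.getD k 0, 0)] = (L.take (k + 1)).zip (S ++ [0]) := by
    rw [List.take_add_one, List.zip_append (by simp; omega), List.getElem?_eq_getElem hL,
      List.getD_eq_getElem _ _ hL]
    rfl
  rw [invFree_longBottom_iff_noInv hk, orientRight_eq_self_iff (L.getD k 0) 0, hcols,
    List.isChain_iff_getElem]
  simp only [List.getElem_zip, List.getElem_take, List.length_zip, List.length_take,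
    List.length_append, List.length_singleton]
  constructor
  · intro h i hi
    have := h (i + 2) (by omega) (by omega)
    simpa [List.getElem?_eq_getElem (show i < L.length by omega),
      List.getElem?_eq_getElem (show i + 1 < L.length by omega),
      List.getElem?_eq_getElem (show i < S.length by omega),
      List.getElem_append_left (show i < S.length by omega)] using this
  · intro h j h1 h2
    obtain ⟨i, rfl⟩ : ∃ i, j = i + 1 := ⟨j - 1, by omega⟩
    cases i with
    | zero =>
      have := hLQ _ (List.getElem_mem (show 0 < L.length by omega))
      simp only [List.getD_cons_succ, List.getD_eq_getElem _ _ (show 0 < L.length by omega)]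
      exact Or.inl ⟨this, hQP⟩
    | succ i =>
      have := h i (by omega)
      simpa [List.getElem?_eq_getElem (show i < L.length by omega),
        List.getElem?_eq_getElem (show i + 1 < L.length by omega),
        List.getElem?_eq_getElem (show i < S.length by omega),
        List.getElem_append_left (show i < S.length by omega)] using this

def ascents : List ℕ → ℕ
  | a :: b :: l => (if a < b then 1 else 0) + ascents (b :: l)
  | _ => 0

def rowMaj : List ℕ → ℕ
  | a :: b :: l => (if a < b then l.length + 1 else 0) + rowMaj (b :: l)
  | _ => 0

lemma ascents_cons_append_singleton (a y : ℕ) (l : List ℕ) :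
    ascents (a :: (l ++ [y])) = ascents (a :: l) + if l.getLastD a < y then 1 else 0 := by
  induction l generalizing a with
  | nil => simp [ascents]
  | cons b l ih =>
    simp only [List.cons_append, ascents, ih, List.getLastD_cons]
    omega

lemma rowMaj_cons_append_singleton (a y : ℕ) (l : List ℕ) :
    rowMaj (a :: (l ++ [y])) = rowMaj (a :: l) + ascents (a :: (l ++ [y])) := by
  induction l generalizing a with
  | nil => simp [rowMaj, ascents]
  | cons b l ih =>
    simp only [List.cons_append, rowMaj, ascents, ih, List.length_append, List.length_singleton]
    split_ifs <;> omega

lemma rowMaj_append_cons (x r : List ℕ) (t : ℕ) :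
    rowMaj (x ++ t :: r) = rowMaj x + (r.length + 1) * ascents (x ++ [t]) + rowMaj (t :: r) := by
  induction x with
  | nil => simp [rowMaj, ascents]
  | cons a x ih =>
    cases x with
    | nil => simp [rowMaj, ascents]
    | cons b x =>
      simp only [List.cons_append, rowMaj, ascents, List.length_append, List.length_cons] at ih ⊢
      rw [ih]
      split_ifs <;> ring

lemma sum_range_ascent_weights_eq_rowMaj (l : List ℕ) :
    ∑ i ∈ Finset.range (l.length - 1),
      (if l.getD i 0 < l.getD (i + 1) 0 then l.length - 1 - i else 0) = rowMaj l := by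
  induction l with
  | nil => rfl
  | cons a l ih =>
    cases l with
    | nil => rfl
    | cons b r =>
      simp only [List.length_cons, Nat.add_sub_cancel] at ih ⊢
      rw [Finset.sum_range_succ', rowMaj, ← ih, add_comm]
      congr 1
      refine Finset.sum_congr rfl fun i _ => ?_
      simp only [List.getD_cons_succ]
      split_ifs <;> omega

lemma maj_twoRowEntry {α₀ α₁ : ℕ} {L S : List ℕ} (hL : L.length = α₀ + 1)
    (hS : S.length = α₁ + 1) :
    maj ![α₀, α₁] (twoRowEntry L S) = rowMaj L + rowMaj S := by
  have hrow : ∀ (l : List ℕ) (m : ℕ), l.length = m + 1 →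
      ∑ j ∈ Finset.Icc 1 m, (if l.getD (j - 1) 0 < l.getD j 0 then m - j + 1 else 0) =
        rowMaj l := by
    intro l m hl
    rw [← sum_range_ascent_weights_eq_rowMaj, hl, Nat.add_sub_cancel,
      ← Finset.Ico_add_one_right_eq_Icc, Finset.sum_Ico_eq_sum_range, Nat.add_sub_cancel]
    refine Finset.sum_congr rfl fun i hi => ?_
    have := Finset.mem_range.mp hi
    simp only [add_comm 1 i, Nat.add_sub_cancel]
    split_ifs <;> omega
  simp only [maj, Fin.sum_univ_two, Matrix.cons_val_zero, Matrix.cons_val_one, twoRowEntry]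
  rw [← hrow L α₀ hL, ← hrow S α₁ hS]
  rfl

lemma long_ascents_exchange (a t : ℕ) (p u w : ℕ × ℕ) (hu : SameCol p u)
    (hau : NoInv a u.1 u.2) (hw : SameCol p w) (hwt : NoInv w.1 t w.2) :
    (if a < u.1 then 1 else 0) + (if u.1 < t then 1 else 0) =
      (if a < w.1 then 1 else 0) + (if w.1 < t then 1 else 0) := by
  obtain ⟨x, y⟩ := p
  rcases hu with rfl | rfl <;> rcases hw with rfl | rfl <;>
    simp only [NoInv, Prod.swap_prod_mk] at * <;> split_ifs <;> omega

lemma short_ascents_exchange (t : ℕ) (p s q u w : ℕ × ℕ) (hsq : SameCol s q)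
    (hq : NoInv q.1 w.1 q.2) (hu : SameCol p u) (hsu : NoInv s.1 u.1 u.2) (hw : SameCol p w)
    (hwt : NoInv w.1 t w.2) :
    (if s.2 < w.1 ∧ w.1 ≤ s.1 then 1 else 0) + (if q.2 < w.2 then 1 else 0) =
      (if s.2 < u.2 then 1 else 0) + (if u.2 < t ∧ t ≤ u.1 then 1 else 0) := by
  obtain ⟨x, y⟩ := p
  obtain ⟨a, b⟩ := s
  rcases hsq with rfl | rfl <;> rcases hu with rfl | rfl <;> rcases hw with rfl | rfl <;>
    simp only [NoInv, Prod.swap_prod_mk] at * <;> split_ifs <;> omega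

lemma last_ascent_exchange (t : ℕ) (s q : ℕ × ℕ) (hsq : SameCol s q) (hq : NoInv q.1 t q.2) :
    (if s.1 < t then 1 else 0) + (if s.2 < t ∧ t ≤ s.1 then 1 else 0) =
      if q.1 < t then 1 else 0 := by
  obtain ⟨a, b⟩ := s
  rcases hsq with rfl | rfl <;>
    simp only [NoInv, Prod.swap_prod_mk] at * <;> split_ifs <;> omega

lemma sameCol_getLastD_orientLeft_orientRight (P Q t : ℕ) (l : List (ℕ × ℕ)) :
    SameCol ((orientLeft P l).getLastD (P, Q)) ((orientRight l t).getLastD (P, Q)) := by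
  rcases List.eq_nil_or_concat' l with rfl | ⟨l, p, rfl⟩
  · exact Or.inl rfl
  · rw [orientLeft_append_singleton, orientRight_append_singleton, List.getLastD_concat,
      List.getLastD_concat]
    exact (sameCol_placeLeft _ p).symm.trans (sameCol_placeRight t p)

lemma noInv_getLastD_orientRight {P Q t : ℕ} (l : List (ℕ × ℕ)) (hQP : Q ≤ P) (ht : t ≤ Q) :
    NoInv ((orientRight l t).getLastD (P, Q)).1 t ((orientRight l t).getLastD (P, Q)).2 := by
  rcases List.eq_nil_or_concat' l with rfl | ⟨l, p, rfl⟩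
  · exact Or.inl ⟨ht, hQP⟩
  · rw [orientRight_append_singleton, List.getLastD_concat]
    exact noInv_placeRight t p

lemma ascents_fst_orientLeft_eq_orientRight (P t : ℕ) (l : List (ℕ × ℕ)) :
    ascents (P :: ((orientLeft P l).map Prod.fst ++ [t])) =
      ascents (P :: ((orientRight l t).map Prod.fst ++ [t])) := by
  induction l using List.reverseRecOn generalizing t with
  | nil => rfl
  | append_singleton l p ih =>
    have hc := ih (placeRight t p).1
    have hex := long_ascents_exchange (((orientLeft P l).map Prod.fst).getLastD P) t p _ _
      (sameCol_placeLeft _ p) (noInv_placeLeft _ p) (sameCol_placeRight t p) (noInv_placeRight t p)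
    rw [orientLeft_append_singleton, orientRight_append_singleton]
    simp only [List.map_append, List.map_cons, List.map_nil, ascents_cons_append_singleton,
      List.getLastD_concat] at hc ⊢
    omega

lemma ascents_snd_orientRight_eq {P Q t : ℕ} {l : List (ℕ × ℕ)} (hQP : Q ≤ P)
    (hl : ∀ x ∈ l, x.1 ≤ Q ∧ x.2 ≤ Q) (ht : t ≤ Q) :
    ascents (Q :: (orientRight l t).map Prod.snd) =
      ascents (Q :: (orientLeft P l).map Prod.snd) +
        if ((orientLeft P l).getLastD (P, Q)).2 < t ∧ t ≤ ((orientLeft P l).getLastD (P, Q)).1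
        then 1 else 0 := by
  induction l using List.reverseRecOn generalizing t with
  | nil =>
    show ascents [Q] = ascents [Q] + if Q < t ∧ t ≤ P then 1 else 0
    rw [if_neg (by omega), add_zero]
  | append_singleton l p ih =>
    have hl' : ∀ x ∈ l, x.1 ≤ Q ∧ x.2 ≤ Q := fun x hx => hl x (by simp [hx])
    rw [orientLeft_append_singleton, orientRight_append_singleton]
    simp only [List.map_append, List.map_cons, List.map_nil, ascents_cons_append_singleton,
      List.getLastD_concat]
    set s := (orientLeft P l).getLastD (P, Q)
    set w := placeRight t p
    have hc : w.1 ≤ Q := ((sameCol_placeRight t p).imp (B := (· ≤ Q)) (hl p (by simp))).1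
    set q := (orientRight l w.1).getLastD (P, Q)
    have hs1 : ((orientLeft P l).map Prod.fst).getLastD P = s.1 := List.getLastD_map (a := (P, Q))
    have hs2 : ((orientLeft P l).map Prod.snd).getLastD Q = s.2 := List.getLastD_map (a := (P, Q))
    have hq2 : ((orientRight l w.1).map Prod.snd).getLastD Q = q.2 :=
      List.getLastD_map (a := (P, Q))
    have hex := short_ascents_exchange t p s q _ w
      (sameCol_getLastD_orientLeft_orientRight P Q w.1 l)
      (noInv_getLastD_orientRight l hQP hc) (sameCol_placeLeft s.1 p) (noInv_placeLeft s.1 p)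
      (sameCol_placeRight t p) (noInv_placeRight t p)
    rw [hs1, hs2, hq2, ih hl' hc]
    omega

lemma ascents_add_ascents_orientLeft_eq {P Q t : ℕ} {l : List (ℕ × ℕ)} (hQP : Q ≤ P)
    (hl : ∀ x ∈ l, x.1 ≤ Q ∧ x.2 ≤ Q) (ht : t ≤ Q) :
    ascents (P :: (orientLeft P l).map Prod.fst) + ascents (Q :: (orientLeft P l).map Prod.snd) =
      ascents (P :: (orientRight l t).map Prod.fst) +
        ascents (Q :: (orientRight l t).map Prod.snd) := by
  have hlong := ascents_fst_orientLeft_eq_orientRight P t l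
  have hshort := ascents_snd_orientRight_eq (P := P) hQP hl ht
  have hex := last_ascent_exchange t _ _ (sameCol_getLastD_orientLeft_orientRight P Q t l)
    (noInv_getLastD_orientRight l hQP ht)
  rw [ascents_cons_append_singleton, ascents_cons_append_singleton,
    List.getLastD_map (a := (P, Q)), List.getLastD_map (a := (P, Q))] at hlong
  omega

lemma rowMaj_add_rowMaj_orientLeft_eq {P Q t : ℕ} {l : List (ℕ × ℕ)} (hQP : Q ≤ P)
    (hl : ∀ x ∈ l, x.1 ≤ Q ∧ x.2 ≤ Q) (ht : t ≤ Q) :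
    rowMaj (P :: (orientLeft P l).map Prod.fst) + rowMaj (Q :: (orientLeft P l).map Prod.snd) =
      rowMaj (P :: (orientRight l t).map Prod.fst) +
        rowMaj (Q :: (orientRight l t).map Prod.snd) := by
  induction l using List.reverseRecOn generalizing t with
  | nil => rfl
  | append_singleton l p ih =>
    have hl' : ∀ x ∈ l, x.1 ≤ Q ∧ x.2 ≤ Q := fun x hx => hl x (by simp [hx])
    have hc := ((sameCol_placeRight t p).imp (B := (· ≤ Q)) (hl p (by simp))).1
    have hasc := ascents_add_ascents_orientLeft_eq hQP hl ht
    have hprev := ih hl' hc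
    rw [orientLeft_append_singleton, orientRight_append_singleton] at hasc ⊢
    simp only [List.map_append, List.map_cons, List.map_nil, rowMaj_cons_append_singleton] at hasc ⊢
    omega

lemma rowMaj_filling_orientLeft_eq {P Q t : ℕ} {l : List (ℕ × ℕ)} (r : List ℕ) (hQP : Q ≤ P)
    (hl : ∀ x ∈ l, x.1 ≤ Q ∧ x.2 ≤ Q) (ht : t ≤ Q) :
    rowMaj (P :: ((orientLeft P l).map Prod.fst ++ t :: r)) +
        rowMaj (Q :: (orientLeft P l).map Prod.snd) =
      rowMaj (P :: ((orientRight l t).map Prod.fst ++ t :: r)) +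
        rowMaj (Q :: (orientRight l t).map Prod.snd) := by
  have hlong := ascents_fst_orientLeft_eq_orientRight P t l
  have hrest := rowMaj_add_rowMaj_orientLeft_eq hQP hl ht
  simp only [← List.cons_append, rowMaj_append_cons] at hlong ⊢
  rw [hlong]
  omega

/-- The rows (long, short) of a two-row filling with shared columns `cols` followed by the
single-entry columns `tail`. -/
def ofCols (cols : List (ℕ × ℕ)) (tail : List ℕ) : List ℕ × List ℕ :=
  (cols.map Prod.fst ++ tail, cols.map Prod.snd)

lemma ofCols_take_zip {k : ℕ} {L S : List ℕ} (hS : S.length = k) (hL : k ≤ L.length) :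
    ofCols ((L.take k).zip S) (L.drop k) = (L, S) := by
  simp [ofCols, List.map_fst_zip, List.map_snd_zip, hS, hL]

lemma length_take_zip {k : ℕ} {L S : List ℕ} (hS : S.length = k) (hL : k ≤ L.length) :
    ((L.take k).zip S).length = k := by
  simp [hS, hL]

lemma take_zip_ofCols {k : ℕ} {cols : List (ℕ × ℕ)} (tail : List ℕ) (h : cols.length = k) :
    ((ofCols cols tail).1.take k).zip (ofCols cols tail).2 = cols ∧
      (ofCols cols tail).1.drop k = tail := by
  subst h
  simp [ofCols, List.zip_map', List.take_left']

lemma length_ofCols (cols : List (ℕ × ℕ)) (tail : List ℕ) :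
    (ofCols cols tail).1.length = cols.length + tail.length ∧
      (ofCols cols tail).2.length = cols.length := by
  simp [ofCols]

lemma ofCols_bounds {B : ℕ → Prop} {cols cols' : List (ℕ × ℕ)} {tail : List ℕ}
    (h : List.Forall₂ SameCol cols cols') (h₁ : ∀ x ∈ (ofCols cols tail).1, B x)
    (h₂ : ∀ x ∈ (ofCols cols tail).2, B x) :
    (∀ x ∈ (ofCols cols' tail).1, B x) ∧ (∀ x ∈ (ofCols cols' tail).2, B x) := by
  induction h with
  | nil => simpa [ofCols] using h₁
  | cons hpq _ ih =>
    simp only [ofCols, List.map_cons, List.cons_append, List.mem_cons, forall_eq_or_imp]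
      at h₁ h₂ ih ⊢
    have := hpq.imp ⟨h₁.1, h₂.1⟩
    exact ⟨⟨this.1, (ih h₁.2 h₂.2).1⟩, this.2, (ih h₁.2 h₂.2).2⟩

lemma colM_ofCols_swap {cols cols' : List (ℕ × ℕ)} (h : List.Forall₂ SameCol cols cols')
    (tail : List ℕ) (j : ℕ) :
    colM (ofCols cols' tail).2 (ofCols cols' tail).1 j =
      colM (ofCols cols tail).1 (ofCols cols tail).2 j := by
  induction h generalizing j with
  | nil => simp [ofCols, colM]
  | @cons p q _ _ hpq _ ih =>
    cases j with
    | zero =>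
      rcases hpq with rfl | rfl
      · simp [ofCols, colM, add_comm]
      · simp [ofCols, colM]
    | succ j => simpa [ofCols, colM] using ih j

def LongTopFilling (N P Q a k : ℕ) (p : List ℕ × List ℕ) : Prop :=
  p.1.length = a ∧ p.2.length = k ∧ (∀ x ∈ p.1, 1 ≤ x ∧ x ≤ N) ∧ (∀ x ∈ p.2, 1 ≤ x ∧ x ≤ N) ∧
    InvFree ![a, k] (twoRowEntry (P :: p.1) (Q :: p.2))

def LongBottomFilling (N P Q a k : ℕ) (p : List ℕ × List ℕ) : Prop :=
  p.1.length = k ∧ p.2.length = a ∧ (∀ x ∈ p.1, 1 ≤ x ∧ x ≤ N) ∧ (∀ x ∈ p.2, 1 ≤ x ∧ x ≤ N) ∧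
    InvFree ![k, a] (twoRowEntry (Q :: p.1) (P :: p.2))

/-- The bijection `φ`: keep the columns and re-orient the shared ones from the right. -/
def toLongBottom (k : ℕ) (p : List ℕ × List ℕ) : List ℕ × List ℕ :=
  (ofCols (orientRight ((p.1.take k).zip p.2) ((p.1.drop k).headD 0)) (p.1.drop k)).swap

def toLongTop (P k : ℕ) (p : List ℕ × List ℕ) : List ℕ × List ℕ :=
  ofCols (orientLeft P ((p.2.take k).zip p.1)) (p.2.drop k)

section maps

variable {N P Q a k : ℕ}

lemma LongTopFilling.orientLeft_eq (hk : k ≤ a) {p : List ℕ × List ℕ}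
    (hp : LongTopFilling N P Q a k p) :
    orientLeft P ((p.1.take k).zip p.2) = (p.1.take k).zip p.2 := by
  obtain ⟨h1, h2, -, -, hinv⟩ := hp
  exact (invFree_longTop_iff_orientLeft_eq hk (by omega) h2).mp hinv

lemma LongBottomFilling.orientRight_eq (hk : k < a) (hNQ : N < Q) (hQP : Q ≤ P)
    {p : List ℕ × List ℕ} (hp : LongBottomFilling N P Q a k p) :
    orientRight ((p.2.take k).zip p.1) ((p.2.drop k).headD 0) = (p.2.take k).zip p.1 := by
  obtain ⟨h1, h2, -, hb, hinv⟩ := hp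
  exact (invFree_longBottom_iff_orientRight_eq hk hQP h1 (by omega)
    fun x hx => (hb x hx).2.trans hNQ.le).mp hinv

lemma toLongBottom_mem (hk : k < a) (hNQ : N < Q) (hQP : Q ≤ P) {p : List ℕ × List ℕ}
    (hp : LongTopFilling N P Q a k p) : LongBottomFilling N P Q a k (toLongBottom k p) := by
  obtain ⟨h1, h2, hb1, hb2, -⟩ := hp
  have hsame := forall₂_sameCol_orientRight ((p.1.take k).zip p.2) ((p.1.drop k).headD 0)
  rw [toLongBottom]
  have hlen : (orientRight ((p.1.take k).zip p.2) ((p.1.drop k).headD 0)).length = k := by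
    rw [length_orientRight, length_take_zip h2 (by omega)]
  generalize hcols : orientRight ((p.1.take k).zip p.2) ((p.1.drop k).headD 0) = cols
    at hsame hlen ⊢
  have hrows : ofCols ((p.1.take k).zip p.2) (p.1.drop k) = p := ofCols_take_zip h2 (by omega)
  obtain ⟨hb1', hb2'⟩ := ofCols_bounds (tail := p.1.drop k) hsame (by rw [hrows]; exact hb1)
    (by rw [hrows]; exact hb2)
  obtain ⟨hzip, hdrop⟩ := take_zip_ofCols (p.1.drop k) hlen
  obtain ⟨hl1, hl2⟩ := length_ofCols cols (p.1.drop k)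
  rw [List.length_drop, hlen] at hl1
  refine ⟨hl2.trans hlen, hl1.trans (by omega), hb2', hb1', ?_⟩
  have hLQ : ∀ x ∈ (ofCols cols (p.1.drop k)).1, x ≤ Q := fun x hx => (hb1' x hx).2.trans hNQ.le
  rw [Prod.fst_swap, Prod.snd_swap,
    invFree_longBottom_iff_orientRight_eq hk hQP (hl2.trans hlen) (by omega) hLQ, hzip, hdrop,
    orientRight_congr (forall₂_sameCol_comm hsame), hcols]

lemma toLongTop_mem (hk : k ≤ a) {p : List ℕ × List ℕ} (hp : LongBottomFilling N P Q a k p) :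
    LongTopFilling N P Q a k (toLongTop P k p) := by
  obtain ⟨h1, h2, hb1, hb2, -⟩ := hp
  have hsame := forall₂_sameCol_orientLeft P ((p.2.take k).zip p.1)
  rw [toLongTop]
  have hlen : (orientLeft P ((p.2.take k).zip p.1)).length = k := by
    rw [length_orientLeft, length_take_zip h1 (by omega)]
  generalize hcols : orientLeft P ((p.2.take k).zip p.1) = cols at hsame hlen ⊢
  have hrows : ofCols ((p.2.take k).zip p.1) (p.2.drop k) = (p.2, p.1) :=
    ofCols_take_zip h1 (by omega)
  obtain ⟨hb2', hb1'⟩ := ofCols_bounds (tail := p.2.drop k) hsame (by rw [hrows]; exact hb2)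
    (by rw [hrows]; exact hb1)
  obtain ⟨hzip, -⟩ := take_zip_ofCols (p.2.drop k) hlen
  obtain ⟨hl1, hl2⟩ := length_ofCols cols (p.2.drop k)
  rw [List.length_drop, hlen] at hl1
  refine ⟨hl1.trans (by omega), hl2.trans hlen, hb2', hb1', ?_⟩
  rw [invFree_longTop_iff_orientLeft_eq hk (by omega) (hl2.trans hlen), hzip, orientLeft_congr
    (forall₂_sameCol_comm hsame), hcols]

lemma toLongTop_toLongBottom (hk : k ≤ a) {p : List ℕ × List ℕ}
    (hp : LongTopFilling N P Q a k p) : toLongTop P k (toLongBottom k p) = p := by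
  have hfix := hp.orientLeft_eq hk
  obtain ⟨h1, h2, -, -, -⟩ := hp
  have hsame := forall₂_sameCol_orientRight ((p.1.take k).zip p.2) ((p.1.drop k).headD 0)
  have hlen : (orientRight ((p.1.take k).zip p.2) ((p.1.drop k).headD 0)).length = k := by
    rw [length_orientRight, length_take_zip h2 (by omega)]
  obtain ⟨hzip, hdrop⟩ := take_zip_ofCols (p.1.drop k) hlen
  rw [toLongTop, toLongBottom, Prod.fst_swap, Prod.snd_swap, hzip, hdrop,
    orientLeft_congr (forall₂_sameCol_comm hsame), hfix, ofCols_take_zip h2 (by omega)]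

lemma toLongBottom_toLongTop (hk : k < a) (hNQ : N < Q) (hQP : Q ≤ P) {p : List ℕ × List ℕ}
    (hp : LongBottomFilling N P Q a k p) : toLongBottom k (toLongTop P k p) = p := by
  have hfix := hp.orientRight_eq hk hNQ hQP
  obtain ⟨h1, h2, -, -, -⟩ := hp
  have hsame := forall₂_sameCol_orientLeft P ((p.2.take k).zip p.1)
  have hlen : (orientLeft P ((p.2.take k).zip p.1)).length = k := by
    rw [length_orientLeft, length_take_zip h1 (by omega)]
  obtain ⟨hzip, hdrop⟩ := take_zip_ofCols (p.2.drop k) hlen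
  rw [toLongTop, toLongBottom, hzip, hdrop, orientRight_congr (forall₂_sameCol_comm hsame), hfix,
    ofCols_take_zip h1 (by omega), Prod.swap_prod_mk]

lemma colM_toLongBottom (hk : k ≤ a) {p : List ℕ × List ℕ} (hp : LongTopFilling N P Q a k p)
    (j : ℕ) : colM (toLongBottom k p).1 (toLongBottom k p).2 j = colM p.1 p.2 j := by
  obtain ⟨h1, h2, -, -, -⟩ := hp
  rw [toLongBottom, Prod.fst_swap, Prod.snd_swap,
    colM_ofCols_swap (forall₂_sameCol_orientRight _ _), ofCols_take_zip h2 (by omega)]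

lemma maj_toLongBottom (hk : k < a) (hNQ : N < Q) (hQP : Q ≤ P) {p : List ℕ × List ℕ}
    (hp : LongTopFilling N P Q a k p) :
    maj ![k, a] (twoRowEntry (Q :: (toLongBottom k p).1) (P :: (toLongBottom k p).2)) =
      maj ![a, k] (twoRowEntry (P :: p.1) (Q :: p.2)) := by
  obtain ⟨h1', h2', -, -, -⟩ := toLongBottom_mem hk hNQ hQP hp
  have hfix := hp.orientLeft_eq hk.le
  obtain ⟨h1, h2, hb1, hb2, -⟩ := hp
  obtain ⟨t, r, htail⟩ : ∃ t r, p.1.drop k = t :: r :=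
    List.exists_cons_of_length_pos (by rw [List.length_drop]; omega)
  have ht : t ≤ Q := by
    have := hb1 t (List.mem_of_mem_drop (htail ▸ List.mem_cons_self))
    omega
  have hbound : ∀ x ∈ (p.1.take k).zip p.2, x.1 ≤ Q ∧ x.2 ≤ Q := by
    intro x hx
    have h := List.of_mem_zip hx
    have := hb1 _ (List.mem_of_mem_take h.1)
    have := hb2 _ h.2
    omega
  have hrows : p = ofCols ((p.1.take k).zip p.2) (t :: r) := by
    rw [← htail, ofCols_take_zip h2 (by omega)]
  have key := rowMaj_filling_orientLeft_eq r hQP hbound ht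
  rw [hfix] at key
  rw [maj_twoRowEntry (by simp [h1']) (by simp [h2']), maj_twoRowEntry (by simp [h1])
    (by simp [h2]), toLongBottom, htail]
  conv_rhs => rw [hrows]
  simp only [ofCols, Prod.fst_swap, Prod.snd_swap, List.headD_cons] at key ⊢
  omega

end maps

theorem two_row_invfree_bijection_general (N a1 a2 : ℕ) (ha : a2 < a1)
    (s1 s2 : ℕ) (hs : s2 < s1) :
    ∃ e : {p : List ℕ × List ℕ //
            p.1.length = a1 ∧ p.2.length = a2 ∧
            (∀ x ∈ p.1, 1 ≤ x ∧ x ≤ N) ∧ (∀ x ∈ p.2, 1 ≤ x ∧ x ≤ N) ∧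
            InvFree ![a1, a2]
              (twoRowEntry ((N + 1 + s1) :: p.1) ((N + 1 + s2) :: p.2))} ≃
          {p : List ℕ × List ℕ //
            p.1.length = a2 ∧ p.2.length = a1 ∧
            (∀ x ∈ p.1, 1 ≤ x ∧ x ≤ N) ∧ (∀ x ∈ p.2, 1 ≤ x ∧ x ≤ N) ∧
            InvFree ![a2, a1]
              (twoRowEntry ((N + 1 + s2) :: p.1) ((N + 1 + s1) :: p.2))},
      ∀ p, maj ![a2, a1]
            (twoRowEntry ((N + 1 + s2) :: (e p).1.1) ((N + 1 + s1) :: (e p).1.2)) =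
          maj ![a1, a2]
            (twoRowEntry ((N + 1 + s1) :: p.1.1) ((N + 1 + s2) :: p.1.2)) ∧
        ∀ j, colM (e p).1.1 (e p).1.2 j = colM p.1.1 p.1.2 j := by
  have hNQ : N < N + 1 + s2 := by omega
  have hQP : N + 1 + s2 ≤ N + 1 + s1 := by omega
  refine ⟨{
    toFun := fun p => ⟨toLongBottom a2 p.1, toLongBottom_mem ha hNQ hQP p.2⟩
    invFun := fun p => ⟨toLongTop (N + 1 + s1) a2 p.1, toLongTop_mem ha.le p.2⟩
    left_inv := fun p => Subtype.ext (toLongTop_toLongBottom ha.le p.2)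
    right_inv := fun p => Subtype.ext (toLongBottom_toLongTop ha hNQ hQP p.2) },
    fun p => ⟨maj_toLongBottom ha hNQ hQP p.2, colM_toLongBottom ha.le p.2⟩⟩

/-- Two-row bijection for inversion-free fillings with big basements: there is a
column-multiset and major-index preserving bijection between inversion-free fillings
of shape `(a₁, a₂)` with big basement `(σ₁, σ₂)` and those of shape `(a₂, a₁)` with
big basement `(σ₂, σ₁)`. (Big basement entries `N + 1 + σᵢ` exceed all entries `≤ N`.) -/
theorem two_row_invfree_bijection (N a1 a2 : ℕ) (ha2 : 1 ≤ a2) (ha : a2 < a1)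
    (s1 s2 : ℕ) (hs : s2 < s1) :
    ∃ e : {p : List ℕ × List ℕ //
            p.1.length = a1 ∧ p.2.length = a2 ∧
            (∀ x ∈ p.1, 1 ≤ x ∧ x ≤ N) ∧ (∀ x ∈ p.2, 1 ≤ x ∧ x ≤ N) ∧
            InvFree ![a1, a2]
              (twoRowEntry ((N + 1 + s1) :: p.1) ((N + 1 + s2) :: p.2))} ≃
          {p : List ℕ × List ℕ //
            p.1.length = a2 ∧ p.2.length = a1 ∧
            (∀ x ∈ p.1, 1 ≤ x ∧ x ≤ N) ∧ (∀ x ∈ p.2, 1 ≤ x ∧ x ≤ N) ∧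
            InvFree ![a2, a1]
              (twoRowEntry ((N + 1 + s2) :: p.1) ((N + 1 + s1) :: p.2))},
      ∀ p, maj ![a2, a1]
            (twoRowEntry ((N + 1 + s2) :: (e p).1.1) ((N + 1 + s1) :: (e p).1.2)) =
          maj ![a1, a2]
            (twoRowEntry ((N + 1 + s1) :: p.1.1) ((N + 1 + s2) :: p.1.2)) ∧
        ∀ j, colM (e p).1.1 (e p).1.2 j = colM p.1.1 p.1.2 j :=
  two_row_invfree_bijection_general N a1 a2 ha s1 s2 hs

end Paper
end
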